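/- Let T be a form of degree d in m+1 variables with a non-redundant decomposition A ⊂ ℙ^m. If ℓ(A) ≤ (d+1)/2, then A is the unique decomposition of T of minimal length; in particular T has rank ℓ(A) and is identifiable. -/

import Mathlib

/-! Distinct points `P` of `ℙ^m`, at most `d + 1` of them, have linearly independent
Veronese images `L_P^d`. Restricting to a general line `u + t w` turns a relation among them
into `∑ c_P (t + x_P)^d = 0` with distinct `x_P`, whose coefficients give the Vandermonde
system `∑ c_P x_P^j = 0` for `j ≤ d`. Hence if `2 ℓ(A) ≤ d + 1` and `ℓ(B) ≤ ℓ(A)`, the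
decompositions `A` and `B` of `T` can be compared on `A ∪ B`; as every coefficient of the
non-redundant `A` is nonzero, `A ⊆ B`. -/

open MvPolynomial
open scoped Classical

noncomputable section

/-- Points of the projective space `ℙ^m` over `ℂ`. -/
abbrev Pt (m : ℕ) := Projectivization ℂ (Fin (m + 1) → ℂ)

/-- The linear form with coefficient vector `v`. -/
def linForm {m : ℕ} (v : Fin (m + 1) → ℂ) : MvPolynomial (Fin (m + 1)) ℂ :=
  ∑ i, C (v i) * X i

/-- The degree-`d` Veronese image of a projective point, i.e. the `d`-th power `L^d`
of a linear form `L` representing the point. -/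
def powRep {m : ℕ} (d : ℕ) (P : Pt m) : MvPolynomial (Fin (m + 1)) ℂ :=
  linForm P.rep ^ d

/-- `A ⊆ ℙ^m` is a decomposition of the form `T` of degree `d`:
`T = a_1 L_1^d + ⋯ + a_r L_r^d`. -/
def IsDecomp {m : ℕ} (d : ℕ) (A : Finset (Pt m))
    (T : MvPolynomial (Fin (m + 1)) ℂ) : Prop :=
  ∃ a : Pt m → ℂ, T = ∑ P ∈ A, a P • powRep d P

/-- A decomposition is non-redundant if `T` is not in the span of `ν_d(A')`
for any proper subset `A' ⊊ A`. -/
def NonRedundant {m : ℕ} (d : ℕ) (A : Finset (Pt m))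
    (T : MvPolynomial (Fin (m + 1)) ℂ) : Prop :=
  ∀ A' : Finset (Pt m), A' ⊂ A →
    T ∉ Submodule.span ℂ (powRep d '' (A' : Set (Pt m)))

/-- The Cayley–Bacharach property `CB(d)`. -/
def CB {m : ℕ} (d : ℕ) (Z : Finset (Pt m)) : Prop :=
  ∀ P ∈ Z, ∀ F : MvPolynomial (Fin (m + 1)) ℂ, F.IsHomogeneous d →
    (∀ Q ∈ Z.erase P, eval Q.rep F = 0) → eval P.rep F = 0

/-- The `d`-th Kruskal rank of a finite set `Z ⊂ ℙ^m`: the largest `k` (at most `ℓ(Z)`)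
such that the Veronese images of every subset of `Z` of cardinality at most `k`
are linearly independent. -/
def kruskalRank {m : ℕ} (d : ℕ) (Z : Finset (Pt m)) : ℕ :=
  sSup {k | k ≤ Z.card ∧ ∀ S ⊆ Z, S.card ≤ k →
    LinearIndependent ℂ (fun P : S => powRep d P.1)}

/-- The evaluation map of degree `d` on (representatives of) the points of `Z`. -/
def evalMap {m : ℕ} (Z : Finset (Pt m)) (d : ℕ) :
    homogeneousSubmodule (Fin (m + 1)) ℂ d →ₗ[ℂ] (Z → ℂ) where
  toFun F P := eval (P : Pt m).rep F.1
  map_add' F G := by funext P; simp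
  map_smul' c F := by funext P; simp [smul_eq_C_mul]

/-- The Hilbert function of a finite set of points `Z ⊂ ℙ^m`. -/
def hf {m : ℕ} (Z : Finset (Pt m)) (d : ℕ) : ℕ :=
  Module.finrank ℂ (LinearMap.range (evalMap Z d))

/-- The first difference of the Hilbert function (with `h_Z(j) = 0` for `j < 0`). -/
def Dhf {m : ℕ} (Z : Finset (Pt m)) (j : ℕ) : ℤ :=
  if j = 0 then (hf Z 0 : ℤ) else (hf Z j : ℤ) - (hf Z (j - 1) : ℤ)


lemma Module.Dual.exists_forall_apply_ne_zero {K M ι : Type*} [Field K] [Infinite K]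
    [AddCommGroup M] [Module K M] (s : Finset ι) (f : ι → Module.Dual K M)
    (hf : ∀ i ∈ s, f i ≠ 0) : ∃ x, ∀ i ∈ s, f i x ≠ 0 := by
  have hker : ∀ i : s, LinearMap.ker (f i) ≠ ⊤ := fun i => by
    simpa [LinearMap.ker_eq_top] using hf i i.2
  obtain ⟨x, -, hx⟩ := Set.exists_of_ssubset <|
    Submodule.iUnion_ssubset_of_forall_ne_top_of_card_lt Finset.univ _ hker
      (by simp [ENat.card_eq_top_of_infinite])
  simp only [Finset.mem_univ, Set.iUnion_true, Set.mem_iUnion, SetLike.mem_coe,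
    LinearMap.mem_ker, not_exists] at hx
  exact ⟨x, fun i hi => hx ⟨i, hi⟩⟩

lemma exists_forall_dotProduct_ne_zero {K n ι : Type*} [Field K] [Infinite K] [Fintype n]
    (s : Finset ι) (v : ι → n → K) (hv : ∀ i ∈ s, v i ≠ 0) :
    ∃ x, ∀ i ∈ s, v i ⬝ᵥ x ≠ 0 :=
  Module.Dual.exists_forall_apply_ne_zero s (fun i => dotProductEquiv K n (v i))
    fun i hi => by simpa using hv i hi

lemma Projectivization.smul_rep_sub_smul_rep_ne_zero {K V : Type*} [Field K] [AddCommGroup V]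
    [Module K V] {P Q : Projectivization K V} (hPQ : P ≠ Q) {a : K} (ha : a ≠ 0) (b : K) :
    a • P.rep - b • Q.rep ≠ 0 := by
  intro h
  apply hPQ
  rw [← P.mk_rep, ← Q.mk_rep, mk_eq_mk_iff']
  refine ⟨a⁻¹ * b, ?_⟩
  rw [mul_smul, ← sub_eq_zero.mp h, smul_smul, inv_mul_cancel₀ ha, one_smul]

lemma eq_zero_of_forall_sum_mul_pow_eq_zero {R ι : Type*} [CommRing R] [IsDomain R]
    {S : Finset ι} {x c : ι → R} (hx : Set.InjOn x S)
    (h : ∀ j < S.card, ∑ i ∈ S, c i * x i ^ j = 0) : ∀ i ∈ S, c i = 0 := by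
  intro i hi
  set g := Lagrange.nodal (S.erase i) x
  have hg : g.natDegree < S.card := by
    rw [Lagrange.natDegree_nodal, Finset.card_erase_of_mem hi]
    exact Nat.sub_lt (Finset.card_pos.mpr ⟨i, hi⟩) one_pos
  have hsum : ∑ k ∈ S, c k * g.eval (x k) = 0 := by
    simp_rw [Polynomial.eval_eq_sum_range' hg, Finset.mul_sum]
    rw [Finset.sum_comm]
    refine Finset.sum_eq_zero fun j hj => ?_
    rw [← mul_zero (g.coeff j), ← h j (Finset.mem_range.mp hj), Finset.mul_sum]
    exact Finset.sum_congr rfl fun k _ => by ring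
  rw [Finset.sum_eq_single_of_mem i hi fun k hk hki =>
    by rw [Lagrange.eval_nodal_at_node (Finset.mem_erase.mpr ⟨hki, hk⟩), mul_zero]] at hsum
  refine (mul_eq_zero.mp hsum).resolve_right ?_
  exact Lagrange.eval_nodal_not_at_node fun k hk =>
    hx.ne hi (Finset.mem_of_mem_erase hk) (Finset.ne_of_mem_erase hk).symm

lemma eq_zero_of_sum_C_mul_X_add_C_pow_eq_zero {K ι : Type*} [Field K] [CharZero K]
    {S : Finset ι} {x c : ι → K} {d : ℕ} (hx : Set.InjOn x S) (hS : S.card ≤ d + 1)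
    (h : ∑ i ∈ S, Polynomial.C (c i) * (Polynomial.X + Polynomial.C (x i)) ^ d = 0) :
    ∀ i ∈ S, c i = 0 := by
  refine eq_zero_of_forall_sum_mul_pow_eq_zero hx fun j hj => ?_
  have hcoeff := congrArg (Polynomial.coeff · (d - j)) h
  simp only [Polynomial.finsetSum_coeff, Polynomial.coeff_C_mul, Polynomial.coeff_X_add_C_pow,
    Nat.sub_sub_self (by omega : j ≤ d), Polynomial.coeff_zero, ← mul_assoc,
    ← Finset.sum_mul] at hcoeff
  exact (mul_eq_zero.mp hcoeff).resolve_right (Nat.cast_ne_zero.mpr (Nat.choose_pos (by omega)).ne')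

lemma eval_linForm {m : ℕ} (v x : Fin (m + 1) → ℂ) : eval x (linForm v) = v ⬝ᵥ x := by
  simp [linForm, dotProduct]

lemma eval_add_smul_powRep {m : ℕ} (d : ℕ) (P : Pt m) (u w : Fin (m + 1) → ℂ) (t : ℂ)
    (hw : P.rep ⬝ᵥ w ≠ 0) :
    eval (u + t • w) (powRep d P) = (P.rep ⬝ᵥ w) ^ d * (t + P.rep ⬝ᵥ u / P.rep ⬝ᵥ w) ^ d := by
  rw [powRep, map_pow, eval_linForm, ← mul_pow, dotProduct_add, dotProduct_smul, smul_eq_mul]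
  congr 1
  field_simp
  ring

theorem linearIndepOn_powRep {m d : ℕ} {Z : Finset (Pt m)} (hZ : Z.card ≤ d + 1) :
    LinearIndepOn ℂ (powRep d) (Z : Set (Pt m)) := by
  rw [linearIndepOn_finset_iff]
  intro c hc
  obtain ⟨w, hw⟩ := exists_forall_dotProduct_ne_zero Z (fun P => P.rep) fun P _ => P.rep_nonzero
  obtain ⟨u, hu⟩ := exists_forall_dotProduct_ne_zero Z.offDiag
    (fun PQ => (PQ.2.rep ⬝ᵥ w) • PQ.1.rep - (PQ.1.rep ⬝ᵥ w) • PQ.2.rep) fun PQ hPQ =>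
      let ⟨_, hQ, hPQ⟩ := Finset.mem_offDiag.mp hPQ
      Projectivization.smul_rep_sub_smul_rep_ne_zero hPQ (hw _ hQ) _
  have hx : Set.InjOn (fun P : Pt m => P.rep ⬝ᵥ u / P.rep ⬝ᵥ w) Z := by
    intro P hP Q hQ hPQ
    by_contra hne
    apply hu (P, Q) (Finset.mem_offDiag.mpr ⟨hP, hQ, hne⟩)
    have := (div_eq_div_iff (hw P hP) (hw Q hQ)).mp hPQ
    simp only [sub_dotProduct, smul_dotProduct, smul_eq_mul]
    linear_combination this
  have hline : ∑ P ∈ Z, Polynomial.C (c P * (P.rep ⬝ᵥ w) ^ d) *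
      (Polynomial.X + Polynomial.C (P.rep ⬝ᵥ u / P.rep ⬝ᵥ w)) ^ d = 0 := by
    refine Polynomial.funext fun t => ?_
    have := congrArg (eval (u + t • w)) hc
    simp only [map_sum, smul_eval, map_zero] at this
    simp only [Polynomial.eval_finsetSum, Polynomial.eval_mul, Polynomial.eval_pow,
      Polynomial.eval_add, Polynomial.eval_C, Polynomial.eval_X, Polynomial.eval_zero, ← this]
    exact Finset.sum_congr rfl fun P hP => by rw [eval_add_smul_powRep d P u w t (hw P hP)]; ring
  intro P hP
  have := eq_zero_of_sum_C_mul_X_add_C_pow_eq_zero hx hZ hline P hP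
  exact (mul_eq_zero.mp this).resolve_right (pow_ne_zero d (hw P hP))

lemma NonRedundant.coeff_ne_zero {m d : ℕ} {A : Finset (Pt m)}
    {T : MvPolynomial (Fin (m + 1)) ℂ} (hAnr : NonRedundant d A T) {a : Pt m → ℂ} (ha : T = ∑ P ∈ A, a P • powRep d P) :
    ∀ P ∈ A, a P ≠ 0 := by
  intro P hP haP
  apply hAnr (A.erase P) (Finset.erase_ssubset hP)
  rw [ha, ← Finset.add_sum_erase A _ hP, haP, zero_smul, zero_add]
  exact Submodule.sum_mem _ fun Q hQ =>
    Submodule.smul_mem _ _ (Submodule.subset_span ⟨Q, hQ, rfl⟩)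

theorem NonRedundant.subset_of_isDecomp {m d : ℕ} {A B : Finset (Pt m)}
    {T : MvPolynomial (Fin (m + 1)) ℂ} (hA : IsDecomp d A T) (hAnr : NonRedundant d A T)
    (hB : IsDecomp d B T) (hcard : A.card + B.card ≤ d + 1) : A ⊆ B := by
  obtain ⟨a, ha⟩ := hA
  obtain ⟨b, hb⟩ := hB
  have hextend : ∀ (S : Finset (Pt m)) (e : Pt m → ℂ), S ⊆ A ∪ B →
      ∑ P ∈ A ∪ B, (if P ∈ S then e P else 0) • powRep d P = ∑ P ∈ S, e P • powRep d P :=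
    fun S e hS => by simp [ite_smul, Finset.sum_ite_mem, Finset.inter_eq_right.mpr hS]
  have hdiff : ∑ P ∈ A ∪ B,
      ((if P ∈ A then a P else 0) - (if P ∈ B then b P else 0)) • powRep d P = 0 := by
    rw [Finset.sum_congr rfl fun P _ => sub_smul _ _ _, Finset.sum_sub_distrib,
      hextend A a Finset.subset_union_left, hextend B b Finset.subset_union_right, ← ha, ← hb,
      sub_self]
  have hcoeff := linearIndepOn_finset_iff.mp
    (linearIndepOn_powRep ((Finset.card_union_le A B).trans hcard)) _ hdiff
  intro P hPA
  by_contra hPB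
  apply hAnr.coeff_ne_zero ha P hPA
  simpa [hPA, hPB] using hcoeff P (Finset.mem_union_left B hPA)

theorem stmt8_general (m d : ℕ) (T : MvPolynomial (Fin (m + 1)) ℂ)
    (A : Finset (Pt m)) (hA : IsDecomp d A T) (hAnr : NonRedundant d A T)
    (hlen : 2 * A.card ≤ d + 1) :
    (∀ B : Finset (Pt m), IsDecomp d B T → A.card ≤ B.card) ∧
      (∀ B : Finset (Pt m), IsDecomp d B T → B.card ≤ A.card → B = A) := by
  refine ⟨fun B hB => ?_, fun B hB hBA => ?_⟩
  · by_contra! hBA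
    have := Finset.card_le_card (hAnr.subset_of_isDecomp hA hB (by omega))
    omega
  · exact (Finset.eq_of_subset_of_card_le (hAnr.subset_of_isDecomp hA hB (by omega)) hBA).symm

/-- If `A` is a non-redundant decomposition of a form `T` of degree `d` with
`ℓ(A) ≤ (d+1)/2` (i.e. `2 ℓ(A) ≤ d+1`), then `A` is the unique decomposition of minimal
length: `T` has rank `ℓ(A)` and is identifiable. -/
theorem stmt8 (m d : ℕ) (T : MvPolynomial (Fin (m + 1)) ℂ) (hT0 : T ≠ 0)
    (hThom : T.IsHomogeneous d)
    (A : Finset (Pt m)) (hA : IsDecomp d A T) (hAnr : NonRedundant d A T)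
    (hlen : 2 * A.card ≤ d + 1) :
    (∀ B : Finset (Pt m), IsDecomp d B T → A.card ≤ B.card) ∧
      (∀ B : Finset (Pt m), IsDecomp d B T → B.card ≤ A.card → B = A) :=
  stmt8_general m d T A hA hAnr hlen

end
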